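/- Let Φ : ℝ³ → ℝ³ be a smooth diffeomorphism with det ∇Φ ≡ 1, let U : ℝ³ → ℝ³ be a smooth vector field, and set W = curl U. Then, as vector fields on ℝ³, (∇Φ(x))^{−1} · W(Φ(x)) = curl( x ↦ (∇Φ(x))ᵀ · U(Φ(x)) )(x) for all x. -/

import Mathlib

open Matrix

/-- Partial derivative in the `i`-th coordinate direction of a function on `ℝ³`. -/
noncomputable def pd3 (f : (Fin 3 → ℝ) → ℝ) (i : Fin 3) (x : Fin 3 → ℝ) : ℝ :=
  fderiv ℝ f x (Pi.single i 1)

/-- Curl of a vector field on `ℝ³`. -/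
noncomputable def curl3 (F : (Fin 3 → ℝ) → Fin 3 → ℝ) (x : Fin 3 → ℝ) : Fin 3 → ℝ :=
  ![pd3 (fun y => F y 2) 1 x - pd3 (fun y => F y 1) 2 x,
    pd3 (fun y => F y 0) 2 x - pd3 (fun y => F y 2) 0 x,
    pd3 (fun y => F y 1) 0 x - pd3 (fun y => F y 0) 1 x]

private lemma smooth_diff {E F : Type*} [NormedAddCommGroup E] [NormedSpace ℝ E]
    [NormedAddCommGroup F] [NormedSpace ℝ F] {f : E → F}
    (hf : ContDiff ℝ (⊤:ℕ∞) f) : Differentiable ℝ f :=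
  hf.differentiable (by simp)

private lemma pd3_contDiff {f : (Fin 3 → ℝ) → ℝ} (hf : ContDiff ℝ (⊤:ℕ∞) f) (i : Fin 3) :
    ContDiff ℝ (⊤:ℕ∞) (pd3 f i) := by
  show ContDiff ℝ (⊤:ℕ∞) fun x => (fderiv ℝ f x) (Pi.single i 1)
  exact (hf.fderiv_right (by exact_mod_cast le_top)).clm_apply contDiff_const

private lemma fderiv_apply_sum {f : (Fin 3 → ℝ) → ℝ} {x : Fin 3 → ℝ}
    (v : Fin 3 → ℝ) :
    fderiv ℝ f x v = ∑ k, v k * pd3 f k x := by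
  have hv : v = ∑ k, v k • ((Pi.single k 1 : Fin 3 → ℝ)) := by
    funext j
    simp [Finset.sum_apply, Pi.single_apply]
  conv_lhs => rw [hv]
  rw [map_sum]
  simp [pd3]

private lemma pd3_proj {Φ : (Fin 3 → ℝ) → Fin 3 → ℝ} (hΦ : ContDiff ℝ (⊤:ℕ∞) Φ)
    (k : Fin 3) (x v : Fin 3 → ℝ) :
    fderiv ℝ Φ x v k = fderiv ℝ (fun y => Φ y k) x v := by
  have h : fderiv ℝ (fun y => Φ y k) x
      = (ContinuousLinearMap.proj k : (Fin 3 → ℝ) →L[ℝ] ℝ).comp (fderiv ℝ Φ x) := by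
    rw [← (ContinuousLinearMap.proj k : (Fin 3 → ℝ) →L[ℝ] ℝ).fderiv (x := Φ x)]
    exact fderiv_comp x (ContinuousLinearMap.proj k).differentiableAt
      (smooth_diff hΦ x)
  rw [h]; rfl

private lemma pd3_comp {f : (Fin 3 → ℝ) → ℝ} {Φ : (Fin 3 → ℝ) → Fin 3 → ℝ}
    (hf : ContDiff ℝ (⊤:ℕ∞) f) (hΦ : ContDiff ℝ (⊤:ℕ∞) Φ) (j : Fin 3) (x : Fin 3 → ℝ) :
    pd3 (fun y => f (Φ y)) j x
      = ∑ k, pd3 f k (Φ x) * pd3 (fun y => Φ y k) j x := by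
  have h1 : fderiv ℝ (f ∘ Φ) x = (fderiv ℝ f (Φ x)).comp (fderiv ℝ Φ x) :=
    fderiv_comp x (smooth_diff hf (Φ x)) (smooth_diff hΦ x)
  have h2 : pd3 (fun y => f (Φ y)) j x
      = fderiv ℝ f (Φ x) (fderiv ℝ Φ x (Pi.single j 1)) := by
    show fderiv ℝ (f ∘ Φ) x (Pi.single j 1) = _
    rw [h1]; rfl
  rw [h2, fderiv_apply_sum]
  refine Finset.sum_congr rfl fun k _ => ?_
  rw [pd3_proj hΦ, mul_comm]
  rfl

private lemma pd3_mul {f g : (Fin 3 → ℝ) → ℝ} {x : Fin 3 → ℝ}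
    (hf : DifferentiableAt ℝ f x) (hg : DifferentiableAt ℝ g x) (j : Fin 3) :
    pd3 (fun y => f y * g y) j x = pd3 f j x * g x + f x * pd3 g j x := by
  simp only [pd3, fderiv_fun_mul hf hg, ContinuousLinearMap.add_apply,
    ContinuousLinearMap.smul_apply, smul_eq_mul]
  ring

private lemma pd3_sum {f : Fin 3 → (Fin 3 → ℝ) → ℝ} {x : Fin 3 → ℝ}
    (hf : ∀ k, DifferentiableAt ℝ (f k) x) (j : Fin 3) :
    pd3 (fun y => ∑ k, f k y) j x = ∑ k, pd3 (f k) j x := by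
  simp only [pd3, fderiv_fun_sum (fun k _ => hf k), ContinuousLinearMap.sum_apply]

private lemma pd3_symm {f : (Fin 3 → ℝ) → ℝ} (hf : ContDiff ℝ (⊤:ℕ∞) f)
    (i j : Fin 3) (x : Fin 3 → ℝ) :
    pd3 (pd3 f i) j x = pd3 (pd3 f j) i x := by
  have hd : DifferentiableAt ℝ (fderiv ℝ f) x :=
    smooth_diff (hf.fderiv_right (by exact_mod_cast le_top)) x
  have key : ∀ v : Fin 3 → ℝ, ∀ w : Fin 3,
      pd3 (fun y => fderiv ℝ f y v) w x = fderiv ℝ (fderiv ℝ f) x (Pi.single w 1) v := by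
    intro v w
    show fderiv ℝ (fun y => (fderiv ℝ f y) v) x (Pi.single w 1) = _
    rw [fderiv_clm_apply hd (differentiableAt_const v)]
    simp
  have h2top : (2 : WithTop ℕ∞) ≤ ((⊤:ℕ∞) : WithTop ℕ∞) := by norm_cast
  have hsymm : IsSymmSndFDerivAt ℝ f x :=
    (hf.contDiffAt).isSymmSndFDerivAt (by rw [minSmoothness_of_isRCLikeNormedField]; exact h2top)
  show pd3 (fun y => fderiv ℝ f y (Pi.single i 1)) j x
      = pd3 (fun y => fderiv ℝ f y (Pi.single j 1)) i x
  rw [key, key, hsymm]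


/-- **Transport of curls by volume-preserving diffeomorphisms.**  If `Φ` is a smooth
diffeomorphism of `ℝ³` with `det ∇Φ ≡ 1`, `U` is a smooth vector field and `W = curl U`,
then `(∇Φ(x))⁻¹ · W(Φ(x)) = curl (x ↦ (∇Φ(x))ᵀ · U(Φ(x)))(x)`. -/
theorem statement9
    (Φ Ψ : (Fin 3 → ℝ) → Fin 3 → ℝ)
    (hΦ : ContDiff ℝ (⊤ : ℕ∞) Φ) (hΨ : ContDiff ℝ (⊤ : ℕ∞) Ψ)
    (hleft : Function.LeftInverse Ψ Φ) (hright : Function.RightInverse Ψ Φ)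
    (J : (Fin 3 → ℝ) → Matrix (Fin 3) (Fin 3) ℝ)
    (hJ : ∀ x i j, J x i j = pd3 (fun y => Φ y i) j x)
    (hdet : ∀ x, (J x).det = 1)
    (U : (Fin 3 → ℝ) → Fin 3 → ℝ) (hU : ContDiff ℝ (⊤ : ℕ∞) U)
    (W : (Fin 3 → ℝ) → Fin 3 → ℝ) (hW : ∀ x, W x = curl3 U x) :
    ∀ x, (J x)⁻¹ *ᵥ W (Φ x) = curl3 (fun y => (J y)ᵀ *ᵥ U (Φ y)) x := by
  intro x
  have hΦi : ∀ i : Fin 3, ContDiff ℝ (⊤:ℕ∞) (fun y => Φ y i) := fun i => contDiff_pi.mp hΦ i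
  have hUi : ∀ i : Fin 3, ContDiff ℝ (⊤:ℕ∞) (fun y => U y i) := fun i => contDiff_pi.mp hU i
  have hVfun : ∀ c : Fin 3, (fun y => ((J y)ᵀ *ᵥ U (Φ y)) c)
      = fun y => ∑ k, pd3 (fun z => Φ z k) c y * U (Φ y) k := by
    intro c; funext y
    simp [Matrix.mulVec, dotProduct, Matrix.transpose_apply, hJ]
  have key : ∀ c b : Fin 3,
      pd3 (fun y => ((J y)ᵀ *ᵥ U (Φ y)) c) b x
      = ∑ k, (pd3 (pd3 (fun z => Φ z k) c) b x * U (Φ x) k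
          + pd3 (fun z => Φ z k) c x *
            ∑ l, pd3 (fun z => U z k) l (Φ x) * pd3 (fun z => Φ z l) b x) := by
    intro c b
    rw [hVfun c]
    rw [pd3_sum (f := fun k y => pd3 (fun z => Φ z k) c y * U (Φ y) k)
      (fun k => ((smooth_diff ((pd3_contDiff (hΦi k) c).mul ((hUi k).comp hΦ))) x)) b]
    refine Finset.sum_congr rfl fun k _ => ?_
    rw [pd3_mul (f := pd3 (fun z => Φ z k) c) (g := fun y => U (Φ y) k)
      (smooth_diff (pd3_contDiff (hΦi k) c) x)
      (smooth_diff ((hUi k).comp hΦ) x) b]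
    have h := pd3_comp (f := fun z => U z k) (hUi k) hΦ b x
    rw [h]
  have hinv : (J x)⁻¹ = (J x).adjugate := by
    rw [Matrix.inv_def, hdet x]
    simp
  have h10 : ∀ k : Fin 3, pd3 (pd3 (fun z => Φ z k) 1) 0 x
      = pd3 (pd3 (fun z => Φ z k) 0) 1 x := fun k => pd3_symm (hΦi k) 1 0 x
  have h20 : ∀ k : Fin 3, pd3 (pd3 (fun z => Φ z k) 2) 0 x
      = pd3 (pd3 (fun z => Φ z k) 0) 2 x := fun k => pd3_symm (hΦi k) 2 0 x
  have h21 : ∀ k : Fin 3, pd3 (pd3 (fun z => Φ z k) 2) 1 x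
      = pd3 (pd3 (fun z => Φ z k) 1) 2 x := fun k => pd3_symm (hΦi k) 2 1 x
  rw [hinv, hW]
  funext a
  fin_cases a
  · show ((J x).adjugate *ᵥ curl3 U (Φ x)) 0 = curl3 (fun y => (J y)ᵀ *ᵥ U (Φ y)) x 0
    simp only [curl3, Matrix.cons_val_zero]
    rw [key 2 1, key 1 2]
    simp only [curl3, Matrix.adjugate_fin_three, Matrix.mulVec, dotProduct,
      Fin.sum_univ_three, hJ, Matrix.cons_val', Matrix.cons_val_zero, Matrix.cons_val_one,
      Matrix.head_cons, Matrix.cons_val_two, Matrix.tail_cons, Matrix.empty_val',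
      Matrix.cons_val_fin_one, Matrix.head_fin_const, Matrix.of_apply, h10, h20, h21]
    ring
  · show ((J x).adjugate *ᵥ curl3 U (Φ x)) 1 = curl3 (fun y => (J y)ᵀ *ᵥ U (Φ y)) x 1
    simp only [curl3, Matrix.cons_val_one, Matrix.head_cons]
    rw [key 0 2, key 2 0]
    simp only [curl3, Matrix.adjugate_fin_three, Matrix.mulVec, dotProduct,
      Fin.sum_univ_three, hJ, Matrix.cons_val', Matrix.cons_val_zero, Matrix.cons_val_one,
      Matrix.head_cons, Matrix.cons_val_two, Matrix.tail_cons, Matrix.empty_val',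
      Matrix.cons_val_fin_one, Matrix.head_fin_const, Matrix.of_apply, h10, h20, h21]
    ring
  · show ((J x).adjugate *ᵥ curl3 U (Φ x)) 2 = curl3 (fun y => (J y)ᵀ *ᵥ U (Φ y)) x 2
    simp only [curl3, Matrix.cons_val_two, Matrix.tail_cons, Matrix.head_cons]
    rw [key 1 0, key 0 1]
    simp only [curl3, Matrix.adjugate_fin_three, Matrix.mulVec, dotProduct,
      Fin.sum_univ_three, hJ, Matrix.cons_val', Matrix.cons_val_zero, Matrix.cons_val_one,
      Matrix.head_cons, Matrix.cons_val_two, Matrix.tail_cons, Matrix.empty_val',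
      Matrix.cons_val_fin_one, Matrix.head_fin_const, Matrix.of_apply, h10, h20, h21]
    ring
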